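/- arXiv:1803.09633 — 8 statements merged into one kernel-verified Lean document; each statement's English description precedes it below -/
import Mathlib

section
/- Let a < b be real numbers and let f : ℝ → ℝ be continuous on [a,b]. Then there exists a real number L such that for every N : ℕ → ℕ with ofSeq (fun n ↦ (N n : ℝ)) infinite positive, the omega sum of f over [a,b] along N is infinitely close to L, i.e., IsSt (ofSeq (fun n ↦ ∑_{k=1}^{N n} f(a + k·(b−a)/(N n)) · (b−a)/(N n))) L holds. -/
open Hyperreal Filter intervalIntegral

lemma riemann_sum_tendsto (a b : ℝ) (hab : a < b) (f : ℝ → ℝ)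
    (hf : ContinuousOn f (Set.Icc a b)) :
    Tendsto (fun m : ℕ => ∑ k ∈ Finset.Icc 1 m, f (a + k * (b - a) / m) * ((b - a) / m))
      atTop (nhds (∫ x in a..b, f x)) := by
  have hba : (0:ℝ) < b - a := sub_pos.2 hab
  rw [Metric.tendsto_atTop]
  intro e he
  have huc : UniformContinuousOn f (Set.Icc a b) :=
    isCompact_Icc.uniformContinuousOn_of_continuous hf
  have he1 : (0:ℝ) < e / (2 * (b - a)) := by positivity
  obtain ⟨δ, hδ, hδ'⟩ := (Metric.uniformContinuousOn_iff.1 huc) _ he1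
  obtain ⟨M, hM⟩ := exists_nat_gt ((b - a) / δ)
  refine ⟨M + 1, fun m hm => ?_⟩
  have hm1 : 1 ≤ m := le_trans (Nat.le_add_left 1 M) hm
  have hm0 : (0:ℝ) < (m:ℝ) := by exact_mod_cast Nat.lt_of_lt_of_le Nat.zero_lt_one hm1
  have hmesh : (b - a) / m < δ := by
    rw [div_lt_iff₀ hm0]
    have h1 : (b - a) / δ < (m:ℝ) :=
      lt_of_lt_of_le hM (by exact_mod_cast le_trans (Nat.le_succ M) hm)
    calc b - a = (b - a) / δ * δ := by field_simp
    _ < (m:ℝ) * δ := mul_lt_mul_of_pos_right h1 hδ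
    _ = δ * m := mul_comm _ _
  set Δ : ℝ := (b - a) / m with hΔ
  have hΔpos : 0 < Δ := div_pos hba hm0
  set x : ℕ → ℝ := fun k => a + k * (b - a) / m with hx
  have hstep : ∀ i : ℕ, x (i + 1) - x i = Δ := by
    intro i
    simp only [hx, hΔ]
    push_cast
    field_simp
    ring
  have hxk : ∀ k : ℕ, k ≤ m → x k ∈ Set.Icc a b := by
    intro k hk
    have hkm : (k:ℝ) ≤ m := by exact_mod_cast hk
    constructor
    · have : (0:ℝ) ≤ k * (b - a) / m := by positivity
      simp only [hx]; linarith
    · simp only [hx]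
      have h2 : (k:ℝ) * (b - a) / m ≤ b - a := by
        rw [div_le_iff₀ hm0]; nlinarith
      linarith
  have hint : ∀ i, i < m → IntervalIntegrable f MeasureTheory.volume (x i) (x (i + 1)) := by
    intro i hi
    apply (hf.mono ?_).intervalIntegrable
    rw [Set.uIcc_of_le (by linarith [hstep i] : x i ≤ x (i + 1))]
    intro t ht
    exact ⟨le_trans (hxk i hi.le).1 ht.1, le_trans ht.2 (hxk (i + 1) hi).2⟩
  have hx0 : x 0 = a := by simp [hx]
  have hxm : x m = b := by
    simp only [hx]
    field_simp
    ring
  have hsplit : ∑ i ∈ Finset.range m, ∫ t in x i..x (i + 1), f t = ∫ t in a..b, f t := by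
    rw [sum_integral_adjacent_intervals hint, hx0, hxm]
  have hsum : ∑ k ∈ Finset.Icc 1 m, f (a + k * (b - a) / m) * ((b - a) / m)
      = ∑ i ∈ Finset.range m, f (x (i + 1)) * Δ := by
    rw [← Finset.Ico_add_one_right_eq_Icc, Finset.sum_Ico_eq_sum_range]
    simp only [Nat.add_sub_cancel]
    refine Finset.sum_congr rfl fun i _ => ?_
    simp only [hx, hΔ]
    push_cast
    ring_nf
  have hterm : ∀ i ∈ Finset.range m,
      |f (x (i + 1)) * Δ - ∫ t in x i..x (i + 1), f t| ≤ e / (2 * (b - a)) * Δ := by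
    intro i hi
    rw [Finset.mem_range] at hi
    have hle : x i ≤ x (i + 1) := by linarith [hstep i]
    have hconst : f (x (i + 1)) * Δ = ∫ t in x i..x (i + 1), f (x (i + 1)) := by
      rw [integral_const, smul_eq_mul, hstep i]; ring
    rw [hconst, ← integral_sub (intervalIntegrable_const) (hint i hi)]
    have hbound : ∀ t ∈ Set.uIoc (x i) (x (i + 1)),
        ‖f (x (i + 1)) - f t‖ ≤ e / (2 * (b - a)) := by
      intro t ht
      rw [Set.uIoc_of_le hle] at ht
      have htab : t ∈ Set.Icc a b :=
        ⟨le_trans (hxk i hi.le).1 ht.1.le, le_trans ht.2 (hxk (i + 1) hi).2⟩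
      have hdist : dist (x (i + 1)) t < δ := by
        rw [Real.dist_eq, abs_of_nonneg (by linarith [ht.2])]
        have h3 := hstep i
        have h4 := ht.1
        linarith [hmesh]
      have h5 := hδ' (x (i + 1)) (hxk (i + 1) hi) t htab hdist
      rw [Real.dist_eq] at h5
      rw [Real.norm_eq_abs]
      exact h5.le
    have h6 := norm_integral_le_of_norm_le_const hbound
    rw [Real.norm_eq_abs] at h6
    calc |∫ t in x i..x (i + 1), f (x (i + 1)) - f t|
        ≤ e / (2 * (b - a)) * |x (i + 1) - x i| := h6
      _ = e / (2 * (b - a)) * Δ := by rw [hstep i, abs_of_pos hΔpos]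
  rw [Real.dist_eq, hsum, ← hsplit, ← Finset.sum_sub_distrib]
  calc |∑ i ∈ Finset.range m, (f (x (i + 1)) * Δ - ∫ t in x i..x (i + 1), f t)|
      ≤ ∑ i ∈ Finset.range m, |f (x (i + 1)) * Δ - ∫ t in x i..x (i + 1), f t| :=
        Finset.abs_sum_le_sum_abs _ _
    _ ≤ ∑ _i ∈ Finset.range m, e / (2 * (b - a)) * Δ := Finset.sum_le_sum hterm
    _ = m * (e / (2 * (b - a)) * Δ) := by
        rw [Finset.sum_const, Finset.card_range, nsmul_eq_mul]
    _ = e / 2 := by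
        simp only [hΔ]
        field_simp
    _ < e := by linarith

/-- Theorem 2: every continuous function on `[a,b]` is omega integrable. -/
theorem continuous_omega_integrable
    (a b : ℝ) (hab : a < b) (f : ℝ → ℝ) (hf : ContinuousOn f (Set.Icc a b)) :
    ∃ L : ℝ, ∀ N : ℕ → ℕ, (ofSeq fun n => (N n : ℝ)).InfinitePos →
      IsSt (ofSeq fun n =>
          ∑ k ∈ Finset.Icc 1 (N n), f (a + k * (b - a) / (N n)) * ((b - a) / (N n))) L := by
  refine ⟨∫ x in a..b, f x, fun N hN => ?_⟩
  rw [isSt_ofSeq_iff_tendsto]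
  have hN' : Tendsto (fun n => N n) (Filter.hyperfilter ℕ : Filter ℕ) atTop := by
    rw [tendsto_atTop]
    intro m
    have h := hN m
    rw [show ((m:ℝ) : ℝ*) = ofSeq (fun _ => (m:ℝ)) from rfl, ofSeq_lt_ofSeq] at h
    filter_upwards [h] with n hn
    exact_mod_cast hn.le
  exact (riemann_sum_tendsto a b hab f hf).comp hN'
end

section
/- Let a < b be real numbers, let f : ℝ → ℝ be continuous on [a,b], and let N, B : ℕ → ℕ be such that both ofSeq (fun n ↦ (N n : ℝ)) and ofSeq (fun n ↦ (B n : ℝ)) are infinite positive. Then the difference between the omega sum of f over [a,b] along the sequence n ↦ B n · N n and the omega sum of f over [a,b] along N is infinitesimal. -/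
open Hyperreal

private lemma refinement_bound (a b : ℝ) (hab : a < b) (f : ℝ → ℝ)
    (hf : ContinuousOn f (Set.Icc a b)) {eps : ℝ} (heps : 0 < eps) :
    ∃ M : ℕ, ∀ nn bb : ℕ, M ≤ nn → 1 ≤ bb →
      |(∑ k ∈ Finset.Icc 1 (bb * nn),
          f (a + k * (b - a) / (bb * nn)) * ((b - a) / (bb * nn))) -
        ∑ k ∈ Finset.Icc 1 nn, f (a + k * (b - a) / nn) * ((b - a) / nn)| < eps := by
  have hba : 0 < b - a := sub_pos.2 hab
  have heps' : 0 < eps / (2 * (b - a)) := by positivity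
  obtain ⟨δ, hδ, H⟩ := Metric.uniformContinuousOn_iff.1
    (isCompact_Icc.uniformContinuousOn_of_continuous hf) _ heps'
  obtain ⟨M, hM⟩ := exists_nat_gt (max 1 ((b - a) / δ))
  refine ⟨M, fun nn bb hn hb => ?_⟩
  have hM1R : (1:ℝ) ≤ M := le_of_lt ((le_max_left _ _).trans_lt hM)
  have hM1 : 1 ≤ M := by exact_mod_cast hM1R
  have hnn : 1 ≤ nn := hM1.trans hn
  have hnR : (0:ℝ) < nn := by exact_mod_cast Nat.lt_of_lt_of_le Nat.zero_lt_one hnn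
  have hbbR : (0:ℝ) < bb := by exact_mod_cast hb
  have hmesh : (b - a) / nn < δ := by
    have h1 : (b - a) / δ < M := (le_max_right _ _).trans_lt hM
    have h2 : (M:ℝ) ≤ nn := Nat.cast_le.2 hn
    rw [div_lt_iff₀ hnR]
    rw [div_lt_iff₀ hδ] at h1
    nlinarith
  have hmem : ∀ (m : ℕ) (d : ℝ), 0 < d → (m:ℝ) ≤ d →
      a + (m:ℝ) * (b - a) / d ∈ Set.Icc a b := by
    intro m d hd hmd
    constructor
    · have : 0 ≤ (m:ℝ) * (b - a) / d := by positivity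
      linarith
    · have : (m:ℝ) * (b - a) / d ≤ b - a := by
        rw [div_le_iff₀ hd]; nlinarith [Nat.cast_nonneg (α := ℝ) m]
      linarith
  have e1 : ∀ n : ℕ, Finset.Icc 1 n = Finset.Ioc 0 n := fun n => Finset.Icc_add_one_left_eq_Ioc 0 n
  have hsplit : ∀ F : ℕ → ℝ, ∀ n : ℕ,
      ∑ j ∈ Finset.Ioc 0 (n * bb), F j
        = ∑ k ∈ Finset.range n, ∑ j ∈ Finset.Ioc (k * bb) ((k + 1) * bb), F j := by
    intro F n
    induction n with
    | zero => simp
    | succ n ih =>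
        rw [Finset.sum_range_succ, ← ih,
          Finset.sum_Ioc_consecutive F (Nat.zero_le _) (Nat.mul_le_mul_right _ (Nat.le_succ n))]
  have e2 : ∀ g : ℕ → ℝ, ∑ k ∈ Finset.Icc 1 nn, g k = ∑ k ∈ Finset.range nn, g (k + 1) := by
    intro g
    rw [← Finset.Ico_add_one_right_eq_Icc, Finset.sum_Ico_eq_sum_range]
    simp [add_comm]
  rw [e2, e1, show bb * nn = nn * bb from Nat.mul_comm bb nn, hsplit,
    ← Finset.sum_sub_distrib]
  have hcard : ∀ k : ℕ, (Finset.Ioc (k * bb) ((k + 1) * bb)).card = bb := by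
    intro k
    have h : (k + 1) * bb = k * bb + bb := by ring
    rw [Nat.card_Ioc, h, Nat.add_sub_cancel_left]
  refine lt_of_le_of_lt (le_trans (Finset.abs_sum_le_sum_abs _ _)
    (Finset.sum_le_sum (g := fun _ : ℕ =>
      (bb:ℝ) * (eps / (2 * (b - a)) * ((b - a) / ((bb:ℝ) * nn)))) ?_)) ?_
  · intro k hk
    have hk' : k + 1 ≤ nn := Finset.mem_range.1 hk
    have hrw : f (a + ((k + 1 : ℕ) : ℝ) * (b - a) / nn) * ((b - a) / nn)
        = ∑ _j ∈ Finset.Ioc (k * bb) ((k + 1) * bb),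
            f (a + ((k + 1 : ℕ) : ℝ) * (b - a) / nn) * ((b - a) / ((bb:ℝ) * nn)) := by
      rw [Finset.sum_const, hcard, nsmul_eq_mul]
      field_simp
    rw [hrw, ← Finset.sum_sub_distrib]
    refine le_trans (Finset.abs_sum_le_sum_abs _ _) ?_
    have hterm : ∀ j ∈ Finset.Ioc (k * bb) ((k + 1) * bb),
        |f (a + (j:ℝ) * (b - a) / ((bb:ℝ) * nn)) * ((b - a) / ((bb:ℝ) * nn)) -
          f (a + ((k + 1 : ℕ) : ℝ) * (b - a) / nn) * ((b - a) / ((bb:ℝ) * nn))|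
          ≤ eps / (2 * (b - a)) * ((b - a) / ((bb:ℝ) * nn)) := by
      intro j hj
      obtain ⟨hjl, hju⟩ := Finset.mem_Ioc.1 hj
      have hjlR : (k:ℝ) * bb < j := by exact_mod_cast hjl
      have hjuR : (j:ℝ) ≤ ((k:ℝ) + 1) * bb := by exact_mod_cast hju
      have hjD : (j:ℝ) ≤ (bb:ℝ) * nn := by
        have : j ≤ nn * bb := hju.trans (Nat.mul_le_mul_right _ hk')
        calc (j:ℝ) ≤ ((nn * bb : ℕ) : ℝ) := by exact_mod_cast this
          _ = (bb:ℝ) * nn := by push_cast; ring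
      have hxmem : a + (j:ℝ) * (b - a) / ((bb:ℝ) * nn) ∈ Set.Icc a b :=
        hmem j ((bb:ℝ) * nn) (by positivity) hjD
      have hymem : a + ((k + 1 : ℕ) : ℝ) * (b - a) / nn ∈ Set.Icc a b :=
        hmem (k + 1) nn hnR (by exact_mod_cast hk')
      have hdist : dist (a + (j:ℝ) * (b - a) / ((bb:ℝ) * nn))
          (a + ((k + 1 : ℕ) : ℝ) * (b - a) / nn) < δ := by
        rw [Real.dist_eq]
        have hD : (0:ℝ) < (bb:ℝ) * nn := by positivity
        have heq : (a + (j:ℝ) * (b - a) / ((bb:ℝ) * nn)) -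
            (a + ((k + 1 : ℕ) : ℝ) * (b - a) / nn)
            = ((j:ℝ) - ((k:ℝ) + 1) * bb) * ((b - a) / ((bb:ℝ) * nn)) := by
          push_cast
          field_simp
          ring
        rw [heq, abs_mul, abs_of_nonneg (by positivity : (0:ℝ) ≤ (b - a) / ((bb:ℝ) * nn))]
        have hA : |(j:ℝ) - ((k:ℝ) + 1) * bb| ≤ bb := by
          rw [abs_le]
          constructor <;> nlinarith
        have hfin : (bb:ℝ) * ((b - a) / ((bb:ℝ) * nn)) = (b - a) / nn := by
          field_simp
        calc |(j:ℝ) - ((k:ℝ) + 1) * bb| * ((b - a) / ((bb:ℝ) * nn))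
            ≤ (bb:ℝ) * ((b - a) / ((bb:ℝ) * nn)) := by
              apply mul_le_mul_of_nonneg_right hA (by positivity)
          _ = (b - a) / nn := hfin
          _ < δ := hmesh
      have hfd := H _ hxmem _ hymem hdist
      rw [Real.dist_eq] at hfd
      rw [← sub_mul, abs_mul,
        abs_of_nonneg (by positivity : (0:ℝ) ≤ (b - a) / ((bb:ℝ) * nn))]
      exact mul_le_mul_of_nonneg_right hfd.le (by positivity)
    refine le_trans (Finset.sum_le_sum hterm) ?_
    rw [Finset.sum_const, hcard, nsmul_eq_mul]
  · rw [Finset.sum_const, Finset.card_range, nsmul_eq_mul]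
    have : (nn:ℝ) * ((bb:ℝ) * (eps / (2 * (b - a)) * ((b - a) / ((bb:ℝ) * nn)))) = eps / 2 := by
      field_simp
    rw [this]
    linarith

/-- Common refinement claim inside Theorem 2: the omega sum for `B·Ω` subintervals
differs from the omega sum for `Ω` subintervals by at most an infinitesimal. -/
theorem omega_sum_refinement_infinitesimal
    (a b : ℝ) (hab : a < b) (f : ℝ → ℝ) (hf : ContinuousOn f (Set.Icc a b))
    (N B : ℕ → ℕ)
    (hN : (ofSeq fun n => (N n : ℝ)).InfinitePos)
    (hB : (ofSeq fun n => (B n : ℝ)).InfinitePos) :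
    Infinitesimal
      ((ofSeq fun n =>
          ∑ k ∈ Finset.Icc 1 (B n * N n),
            f (a + k * (b - a) / (B n * N n)) * ((b - a) / (B n * N n))) -
        ofSeq fun n =>
          ∑ k ∈ Finset.Icc 1 (N n), f (a + k * (b - a) / (N n)) * ((b - a) / (N n))) := by
  rw [Hyperreal.infinitesimal_def]
  intro eps heps
  obtain ⟨M, hM⟩ := refinement_bound a b hab f hf heps
  have h1 : ∀ᶠ n in (Filter.hyperfilter ℕ : Filter ℕ), (M:ℝ) < N n :=
    Filter.Germ.coe_lt.1 (hN M)
  have h2 : ∀ᶠ n in (Filter.hyperfilter ℕ : Filter ℕ), (1:ℝ) < B n :=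
    Filter.Germ.coe_lt.1 (hB 1)
  have h3 : ∀ᶠ n in (Filter.hyperfilter ℕ : Filter ℕ),
      |(∑ k ∈ Finset.Icc 1 (B n * N n),
          f (a + k * (b - a) / (B n * N n)) * ((b - a) / (B n * N n))) -
        ∑ k ∈ Finset.Icc 1 (N n), f (a + k * (b - a) / (N n)) * ((b - a) / (N n))| < eps := by
    filter_upwards [h1, h2] with n hn1 hn2
    exact hM (N n) (B n) (by exact_mod_cast hn1.le) (by exact_mod_cast hn2.le)
  constructor
  · rw [← Hyperreal.coe_neg]
    exact Filter.Germ.coe_lt.2 (by filter_upwards [h3] with n hn using (abs_lt.1 hn).1)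
  · exact Filter.Germ.coe_lt.2 (by filter_upwards [h3] with n hn using (abs_lt.1 hn).2)
end

section
/- Let a < b < c be real numbers and let f : ℝ → ℝ be continuous on [a,c]. Then for all N₁, N₂, N₃ : ℕ → ℕ such that ofSeq (fun n ↦ (Nᵢ n : ℝ)) is infinite positive for i = 1,2,3, we have st(omega sum of f over [a,b] along N₁) + st(omega sum of f over [b,c] along N₂) = st(omega sum of f over [a,c] along N₃). -/
open Hyperreal Filter intervalIntegral Topology

lemma riemann_tendsto (a b : ℝ) (hab : a < b) (f : ℝ → ℝ)
    (hf : ContinuousOn f (Set.Icc a b)) :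
    Tendsto (fun m : ℕ => ∑ k ∈ Finset.Icc 1 m, f (a + k * (b - a) / m) * ((b - a) / m))
      atTop (𝓝 (∫ x in a..b, f x)) := by
  rw [Metric.tendsto_atTop]
  intro e he
  have hba : (0:ℝ) < b - a := sub_pos.2 hab
  set e' := e / (2 * (b - a)) with he'def
  have he' : 0 < e' := div_pos he (by positivity)
  have huc : UniformContinuousOn f (Set.Icc a b) :=
    (isCompact_Icc).uniformContinuousOn_of_continuous hf
  rw [Metric.uniformContinuousOn_iff] at huc
  obtain ⟨δ, hδ, hδf⟩ := huc e' he'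
  obtain ⟨M, hM⟩ := exists_nat_gt ((b - a) / δ)
  refine ⟨M + 1, fun m hm => ?_⟩
  have hm1 : 1 ≤ m := le_trans (Nat.le_add_left 1 M) hm
  have hm0 : (0:ℝ) < m := by exact_mod_cast hm1
  set Δ := (b - a) / (m:ℝ) with hΔdef
  have hΔ : 0 < Δ := div_pos hba hm0
  have hΔδ : Δ < δ := by
    rw [hΔdef, div_lt_iff₀ hm0]
    have h1 : b - a < M * δ := (div_lt_iff₀ hδ).1 hM
    have h2 : (M:ℝ) * δ ≤ m * δ := by
      have : (M:ℝ) ≤ m := by exact_mod_cast le_trans (Nat.le_succ M) hm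
      nlinarith
    nlinarith
  set x : ℕ → ℝ := fun k => a + k * Δ with hxdef
  have hmΔ : (m:ℝ) * Δ = b - a := by
    rw [hΔdef]; field_simp
  have hxm : ∀ k : ℕ, k ≤ m → x k ∈ Set.Icc a b := by
    intro k hk
    constructor
    · simp only [hxdef]; nlinarith [Nat.cast_nonneg (α := ℝ) k]
    · simp only [hxdef]
      have : (k:ℝ) * Δ ≤ m * Δ := by
        have : (k:ℝ) ≤ m := by exact_mod_cast hk
        nlinarith
      linarith [hmΔ]
  have hstep : ∀ k : ℕ, x (k + 1) - x k = Δ := by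
    intro k; simp only [hxdef]; push_cast; ring
  have hle : ∀ k : ℕ, x k ≤ x (k + 1) := by
    intro k; nlinarith [hstep k]
  have hint : ∀ k : ℕ, k < m → IntervalIntegrable f MeasureTheory.volume (x k) (x (k + 1)) := by
    intro k hk
    apply ContinuousOn.intervalIntegrable
    apply hf.mono
    rw [Set.uIcc_of_le (hle k)]
    exact Set.Icc_subset_Icc (hxm k hk.le).1 (hxm (k+1) hk).2
  have hsplit : ∑ k ∈ Finset.range m, ∫ t in x k..x (k + 1), f t = ∫ t in a..b, f t := by
    have h0 : x 0 = a := by simp [hxdef]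
    have hb : x m = b := by simp only [hxdef]; linarith [hmΔ]
    rw [intervalIntegral.sum_integral_adjacent_intervals hint, h0, hb]
  have hsum : (∑ k ∈ Finset.Icc 1 m, f (a + k * (b - a) / m) * ((b - a) / m))
      = ∑ k ∈ Finset.range m, f (x (k + 1)) * Δ := by
    rw [← Finset.Ico_add_one_right_eq_Icc, Finset.sum_Ico_eq_sum_range]
    simp only [Nat.add_sub_cancel]
    refine Finset.sum_congr rfl fun i _ => ?_
    have h1 : a + (↑(1 + i) : ℝ) * (b - a) / ↑m = x (i + 1) := by
      simp only [hxdef, hΔdef]; push_cast; ring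
    rw [h1]
  have hterm : ∀ k ∈ Finset.range m,
      |f (x (k + 1)) * Δ - ∫ t in x k..x (k + 1), f t| ≤ e' * Δ := by
    intro k hk
    rw [Finset.mem_range] at hk
    have hconst : f (x (k + 1)) * Δ = ∫ _ in x k..x (k + 1), f (x (k + 1)) := by
      rw [intervalIntegral.integral_const, hstep k, smul_eq_mul, mul_comm]
    rw [hconst, ← intervalIntegral.integral_sub (intervalIntegrable_const) (hint k hk)]
    have := intervalIntegral.norm_integral_le_of_norm_le_const (C := e')
      (f := fun t => f (x (k + 1)) - f t) (a := x k) (b := x (k + 1)) ?_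
    · rw [Real.norm_eq_abs] at this
      calc |∫ t in x k..x (k+1), (f (x (k+1)) - f t)| ≤ e' * |x (k+1) - x k| := this
        _ = e' * Δ := by rw [hstep k, abs_of_pos hΔ]
    · intro t ht
      rw [Set.uIoc_of_le (hle k)] at ht
      have htmem : t ∈ Set.Icc a b := by
        constructor
        · linarith [(hxm k hk.le).1, ht.1]
        · linarith [(hxm (k+1) hk).2, ht.2]
      have hd : dist (x (k + 1)) t < δ := by
        rw [Real.dist_eq, abs_lt]
        constructor
        · linarith [ht.2]
        · have := hstep k; linarith [ht.1]
      have := hδf (x (k+1)) (hxm (k+1) hk) t htmem hd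
      rw [Real.dist_eq] at this
      rw [Real.norm_eq_abs]
      exact this.le
  rw [Real.dist_eq, hsum, ← hsplit, ← Finset.sum_sub_distrib]
  calc |∑ k ∈ Finset.range m, (f (x (k+1)) * Δ - ∫ t in x k..x (k+1), f t)|
      ≤ ∑ k ∈ Finset.range m, |f (x (k+1)) * Δ - ∫ t in x k..x (k+1), f t| :=
        Finset.abs_sum_le_sum_abs _ _
    _ ≤ ∑ _k ∈ Finset.range m, e' * Δ := Finset.sum_le_sum hterm
    _ = m * (e' * Δ) := by rw [Finset.sum_const, Finset.card_range, nsmul_eq_mul]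
    _ = e' * (b - a) := by rw [← hmΔ]; ring
    _ = e / 2 := by rw [he'def]; field_simp
    _ < e := by linarith

lemma st_ofSeq_comp {S : ℕ → ℝ} {L : ℝ} (hS : Tendsto S atTop (𝓝 L))
    {N : ℕ → ℕ} (hN : (ofSeq fun n => (N n : ℝ)).InfinitePos) :
    st (ofSeq fun n => S (N n)) = L := by
  apply IsSt.st_eq
  rw [isSt_ofSeq_iff_tendsto]
  have hN' : Tendsto N (hyperfilter ℕ) atTop := by
    rw [tendsto_atTop]
    intro m
    have h2 : ofSeq (fun _ => (m:ℝ)) < ofSeq (fun n => (N n:ℝ)) := hN m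
    exact (ofSeq_lt_ofSeq.1 h2).mono fun n h => by exact_mod_cast h.le
  exact hS.comp hN'

/-- Theorem 3: additivity of the omega integral for continuous functions. -/
theorem omega_integral_additive
    (a b c : ℝ) (hab : a < b) (hbc : b < c) (f : ℝ → ℝ)
    (hf : ContinuousOn f (Set.Icc a c))
    (N₁ N₂ N₃ : ℕ → ℕ)
    (hN₁ : (ofSeq fun n => (N₁ n : ℝ)).InfinitePos)
    (hN₂ : (ofSeq fun n => (N₂ n : ℝ)).InfinitePos)
    (hN₃ : (ofSeq fun n => (N₃ n : ℝ)).InfinitePos) :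
    st (ofSeq fun n =>
        ∑ k ∈ Finset.Icc 1 (N₁ n), f (a + k * (b - a) / (N₁ n)) * ((b - a) / (N₁ n))) +
      st (ofSeq fun n =>
        ∑ k ∈ Finset.Icc 1 (N₂ n), f (b + k * (c - b) / (N₂ n)) * ((c - b) / (N₂ n))) =
      st (ofSeq fun n =>
        ∑ k ∈ Finset.Icc 1 (N₃ n), f (a + k * (c - a) / (N₃ n)) * ((c - a) / (N₃ n))) := by
  have hac : a < c := hab.trans hbc
  have hf1 : ContinuousOn f (Set.Icc a b) := hf.mono (Set.Icc_subset_Icc le_rfl hbc.le)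
  have hf2 : ContinuousOn f (Set.Icc b c) := hf.mono (Set.Icc_subset_Icc hab.le le_rfl)
  rw [st_ofSeq_comp (riemann_tendsto a b hab f hf1) hN₁,
    st_ofSeq_comp (riemann_tendsto b c hbc f hf2) hN₂,
    st_ofSeq_comp (riemann_tendsto a c hac f hf) hN₃]
  exact intervalIntegral.integral_add_adjacent_intervals
    (ContinuousOn.intervalIntegrable (by rw [Set.uIcc_of_le hab.le]; exact hf1))
    (ContinuousOn.intervalIntegrable (by rw [Set.uIcc_of_le hbc.le]; exact hf2))
end

section
/- Let a < b < c be real numbers, let f : ℝ → ℝ be continuous on [a,c], let N : ℕ → ℕ be such that ofSeq (fun n ↦ (N n : ℝ)) is infinite positive, and define B : ℕ → ℕ by B n = ⌊(N n)·(b−a)/(c−a)⌋. Then the hyperreal ofSeq (fun n ↦ ∑_{k=1}^{B n} f(a + k·(b−a)/(B n))·(b−a)/(B n) − ∑_{k=1}^{B n} f(a + k·(c−a)/(N n))·(c−a)/(N n)) is infinitesimal. -/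
open Hyperreal Filter

set_option maxHeartbeats 1000000 in
lemma aux_tendsto (a b c : ℝ) (hab : a < b) (hbc : b < c) (f : ℝ → ℝ)
    (hf : ContinuousOn f (Set.Icc a c)) :
    Tendsto (fun m : ℕ =>
      (∑ k ∈ Finset.Icc 1 (⌊(m : ℝ) * (b - a) / (c - a)⌋₊),
          f (a + k * (b - a) / (⌊(m : ℝ) * (b - a) / (c - a)⌋₊)) *
            ((b - a) / (⌊(m : ℝ) * (b - a) / (c - a)⌋₊))) -
        ∑ k ∈ Finset.Icc 1 (⌊(m : ℝ) * (b - a) / (c - a)⌋₊),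
          f (a + k * (c - a) / m) * ((c - a) / m)) atTop (nhds 0) := by
  set s : ℝ := b - a with hs
  set t : ℝ := c - a with ht
  have hs0 : 0 < s := by rw [hs]; linarith
  have ht0 : 0 < t := by rw [ht]; linarith
  have hst : s < t := by rw [hs, ht]; linarith
  have hsb : a + s ≤ c := by rw [hs]; linarith
  have hc : IsCompact (Set.Icc a c) := isCompact_Icc
  have huc : UniformContinuousOn f (Set.Icc a c) :=
    hc.uniformContinuousOn_of_continuous hf
  obtain ⟨C, hC⟩ := hc.exists_bound_of_continuousOn hf
  set M : ℝ := max C 0 with hM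
  have hM0 : 0 ≤ M := le_max_right _ _
  have hMb : ∀ x ∈ Set.Icc a c, |f x| ≤ M := fun x hx =>
    (hC x hx).trans (le_max_left _ _)
  clear_value s t M
  rw [Metric.tendsto_atTop]
  intro ε' hε'
  obtain ⟨δ, hδ0, hδ⟩ := Metric.uniformContinuousOn_iff.mp huc (ε' / (2 * s))
    (by positivity)
  obtain ⟨m0, hm0⟩ := exists_nat_gt (max (t / δ) (max (2 * M * t / ε') (t / s)))
  refine ⟨m0, fun m hm => ?_⟩
  have hmR : (m : ℝ) ≥ m0 := Nat.cast_le.mpr hm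
  have h1 : t / δ < (m : ℝ) := lt_of_le_of_lt (le_max_left _ _) (lt_of_lt_of_le hm0 hmR)
  have h2 : 2 * M * t / ε' < (m : ℝ) :=
    lt_of_le_of_lt ((le_max_left _ _).trans (le_max_right _ _)) (lt_of_lt_of_le hm0 hmR)
  have h3 : t / s < (m : ℝ) :=
    lt_of_le_of_lt ((le_max_right _ _).trans (le_max_right _ _)) (lt_of_lt_of_le hm0 hmR)
  have hmpos : (0 : ℝ) < m := lt_trans (by positivity) h3
  set K : ℕ := ⌊(m : ℝ) * s / t⌋₊ with hKdef
  have hK1 : 1 ≤ K := by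
    rw [hKdef]
    apply Nat.le_floor
    rw [Nat.cast_one, le_div_iff₀ ht0, one_mul]
    rw [div_lt_iff₀ hs0] at h3
    linarith
  have hKle : (K : ℝ) ≤ (m : ℝ) * s / t := Nat.floor_le (by positivity)
  have hKgt : (m : ℝ) * s / t < K + 1 := Nat.lt_floor_add_one _
  clear_value K
  have hKpos : (0 : ℝ) < K := by exact_mod_cast hK1
  have hKle' : (K : ℝ) * t ≤ (m : ℝ) * s := by
    rw [le_div_iff₀ ht0] at hKle; linarith
  have hKgt' : (m : ℝ) * s < ((K : ℝ) + 1) * t := by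
    rw [div_lt_iff₀ ht0] at hKgt; linarith
  set h₁ : ℝ := s / K with hh1
  set h₂ : ℝ := t / m with hh2
  have hh1pos : 0 < h₁ := by rw [hh1]; positivity
  have hh2pos : 0 < h₂ := by rw [hh2]; positivity
  have hKh1 : (K : ℝ) * h₁ = s := by rw [hh1]; field_simp
  have hh2m : h₂ * (m : ℝ) = t := by rw [hh2]; field_simp
  clear_value h₁ h₂
  have e1 : (K : ℝ) * (h₂ * m) ≤ (m : ℝ) * ((K : ℝ) * h₁) := by
    rw [hh2m, hKh1]; exact hKle'
  have e2 : (m : ℝ) * ((K : ℝ) * h₁) < ((K : ℝ) + 1) * (h₂ * m) := by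
    rw [hKh1, hh2m]; exact hKgt'
  have hle : h₂ ≤ h₁ := by nlinarith [e1, mul_pos hKpos hmpos]
  have hgap : (K : ℝ) * (h₁ - h₂) < h₂ := by nlinarith [e2, hmpos]
  have hh2δ : h₂ < δ := by
    rw [div_lt_iff₀ hδ0] at h1
    nlinarith [hh2m, hmpos]
  have key : ∀ k ∈ Finset.Icc 1 K,
      |f (a + k * h₁) * h₁ - f (a + k * h₂) * h₂| ≤
        ε' / (2 * s) * h₁ + M * (h₁ - h₂) := by
    intro k hk
    obtain ⟨hk1, hk2⟩ := Finset.mem_Icc.mp hk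
    have hkR : (1 : ℝ) ≤ k := by exact_mod_cast hk1
    have hkK : (k : ℝ) ≤ K := by exact_mod_cast hk2
    have hb1 : (k : ℝ) * h₁ ≤ (K : ℝ) * h₁ := mul_le_mul_of_nonneg_right hkK hh1pos.le
    have hb2 : (k : ℝ) * h₂ ≤ (k : ℝ) * h₁ := mul_le_mul_of_nonneg_left hle (by linarith)
    have hb3 : (k : ℝ) * (h₁ - h₂) ≤ (K : ℝ) * (h₁ - h₂) :=
      mul_le_mul_of_nonneg_right hkK (by linarith)
    have hx : a + k * h₁ ∈ Set.Icc a c := by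
      constructor
      · nlinarith
      · linarith [hKh1, hsb]
    have hy : a + k * h₂ ∈ Set.Icc a c := by
      constructor
      · nlinarith
      · linarith [hKh1, hsb]
    have hdist : dist (a + k * h₁) (a + k * h₂) < δ := by
      rw [Real.dist_eq]
      have he : a + k * h₁ - (a + k * h₂) = k * (h₁ - h₂) := by ring
      rw [he, abs_of_nonneg (by nlinarith)]
      linarith
    have huc' := hδ _ hx _ hy hdist
    rw [Real.dist_eq] at huc'
    have hfb := hMb _ hy
    have habs : |f (a + k * h₂)| ≤ M := hfb
    calc |f (a + k * h₁) * h₁ - f (a + k * h₂) * h₂|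
        = |(f (a + k * h₁) - f (a + k * h₂)) * h₁ + f (a + k * h₂) * (h₁ - h₂)| := by
          congr 1; ring
      _ ≤ |(f (a + k * h₁) - f (a + k * h₂)) * h₁| + |f (a + k * h₂) * (h₁ - h₂)| :=
          abs_add_le _ _
      _ ≤ ε' / (2 * s) * h₁ + M * (h₁ - h₂) := by
          rw [abs_mul, abs_mul, abs_of_nonneg hh1pos.le,
            abs_of_nonneg (sub_nonneg.mpr hle)]
          exact add_le_add (mul_le_mul_of_nonneg_right huc'.le hh1pos.le)
            (mul_le_mul_of_nonneg_right habs (sub_nonneg.mpr hle))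
  have hMh2 : M * h₂ < ε' / 2 := by
    rw [div_lt_iff₀ hε'] at h2
    have hMt : M * h₂ * m = M * t := by rw [mul_assoc, hh2m]
    nlinarith [hMt, hmpos]
  have hA : ε' / (2 * s) * ((K : ℝ) * h₁) = ε' / 2 := by
    rw [hKh1]; field_simp
  have hsum : |(∑ k ∈ Finset.Icc 1 K, f (a + k * h₁) * h₁) -
      ∑ k ∈ Finset.Icc 1 K, f (a + k * h₂) * h₂| < ε' := by
    rw [← Finset.sum_sub_distrib]
    calc |∑ k ∈ Finset.Icc 1 K, (f (a + k * h₁) * h₁ - f (a + k * h₂) * h₂)|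
        ≤ ∑ k ∈ Finset.Icc 1 K, |f (a + k * h₁) * h₁ - f (a + k * h₂) * h₂| :=
          Finset.abs_sum_le_sum_abs _ _
      _ ≤ ∑ _k ∈ Finset.Icc 1 K, (ε' / (2 * s) * h₁ + M * (h₁ - h₂)) :=
          Finset.sum_le_sum key
      _ = K * (ε' / (2 * s) * h₁ + M * (h₁ - h₂)) := by
          rw [Finset.sum_const, Nat.card_Icc, Nat.add_sub_cancel, nsmul_eq_mul]
      _ < ε' := by
          nlinarith [hA, hMh2, mul_le_mul_of_nonneg_left hgap.le hM0]
  rw [Real.dist_eq, sub_zero]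
  simp only [mul_div_assoc]
  rw [← hh1, ← hh2]
  exact hsum

/-- Claim (20) in the proof of Theorem 3: the omega sum of `f` on `[a,b]` with `B`
subintervals differs by at most an infinitesimal from the first `B` terms of the
omega sum of `f` on `[a,c]` with `N` subintervals. -/
theorem omega_sum_left_piece_infinitesimal
    (a b c : ℝ) (hab : a < b) (hbc : b < c) (f : ℝ → ℝ)
    (hf : ContinuousOn f (Set.Icc a c))
    (N : ℕ → ℕ) (hN : (ofSeq fun n => (N n : ℝ)).InfinitePos)
    (B : ℕ → ℕ) (hB : ∀ n, B n = ⌊(N n : ℝ) * (b - a) / (c - a)⌋₊) :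
    Infinitesimal (ofSeq fun n =>
      (∑ k ∈ Finset.Icc 1 (B n), f (a + k * (b - a) / (B n)) * ((b - a) / (B n))) -
        ∑ k ∈ Finset.Icc 1 (B n), f (a + k * (c - a) / (N n)) * ((c - a) / (N n))) := by
  have htend : Filter.Tendsto (fun n => N n) (hyperfilter ℕ : Filter ℕ) Filter.atTop := by
    rw [Filter.tendsto_atTop]
    intro b0
    have h := ofSeq_lt_ofSeq.mp (hN (b0 : ℝ))
    filter_upwards [h] with n hn
    exact_mod_cast hn.le
  have hcomp := (aux_tendsto a b c hab hbc f hf).comp htend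
  have : Filter.Tendsto (fun n =>
      (∑ k ∈ Finset.Icc 1 (B n), f (a + k * (b - a) / (B n)) * ((b - a) / (B n))) -
        ∑ k ∈ Finset.Icc 1 (B n), f (a + k * (c - a) / (N n)) * ((c - a) / (N n)))
      (hyperfilter ℕ : Filter ℕ) (nhds 0) := by
    simp only [hB]
    exact hcomp
  exact isSt_ofSeq_iff_tendsto.mpr this
end

section
/- Let a < b be real numbers, let f : ℝ → ℝ be continuous on [a,b], and define F : ℝ → ℝ by F x = ∫ t in a..x, f t (the interval integral with respect to Lebesgue measure). Then for every real x ∈ [a,b] and every infinitesimal hyperreal α ≠ 0 such that a ≤ (x : ℝ*) + α ≤ b, the hyperreal (F*((x : ℝ*) + α) − F x)/α is infinitely close to f x, i.e., IsSt ((F*((x : ℝ*) + α) − (F x : ℝ*))/α) (f x) holds, where F* is the hyperreal extension of F. -/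
open Hyperreal

/-- The hyperreal (natural) extension of a real function, given by the induced map
on germs. -/
noncomputable def Hyperreal.extension (f : ℝ → ℝ) : ℝ* → ℝ* := Filter.Germ.map f

/-- Theorem 4 (FTC I, nonstandard form): the difference quotient of
`F x = ∫ t in a..x, f t` over any nonzero infinitesimal increment is infinitely
close to `f x`. -/
theorem ftc_one_nonstandard
    (a b : ℝ) (hab : a < b) (f : ℝ → ℝ) (hf : ContinuousOn f (Set.Icc a b))
    (F : ℝ → ℝ) (hF : ∀ x : ℝ, F x = ∫ t in a..x, f t)
    (x : ℝ) (hx : x ∈ Set.Icc a b)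
    (α : ℝ*) (hα : Infinitesimal α) (hα0 : α ≠ 0)
    (hmem : (a : ℝ*) ≤ (x : ℝ*) + α ∧ (x : ℝ*) + α ≤ (b : ℝ*)) :
    IsSt ((Hyperreal.extension F ((x : ℝ*) + α) - (F x : ℝ*)) / α) (f x) := by
  -- FTC: F has derivative f x within Icc a b at x
  haveI : Fact (x ∈ Set.Icc a b) := ⟨hx⟩
  have hint : IntervalIntegrable f MeasureTheory.volume a x :=
    (hf.mono (Set.uIcc_subset_Icc ⟨le_refl a, hab.le⟩ hx)).intervalIntegrable
  have hmeas : StronglyMeasurableAtFilter f (nhdsWithin x (Set.Icc a b)) :=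
    ⟨Set.Icc a b, self_mem_nhdsWithin, hf.aestronglyMeasurable measurableSet_Icc⟩
  have hderiv : HasDerivWithinAt F (f x) (Set.Icc a b) x := by
    have := intervalIntegral.integral_hasDerivWithinAt_right (a := a)
      (s := Set.Icc a b) (t := Set.Icc a b) hint hmeas (hf x hx)
    rw [show F = (fun x => ∫ t in a..x, f t) from funext hF]
    exact this
  rw [hasDerivWithinAt_iff_tendsto_slope] at hderiv
  rcases ofSeq_surjective α with ⟨s, rfl⟩
  show IsSt (ofSeq fun n => (F (x + s n) - F x) / s n) (f x)
  rw [isSt_ofSeq_iff_tendsto, Metric.tendsto_nhds]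
  intro eps heps
  rw [Metric.tendsto_nhdsWithin_nhds] at hderiv
  obtain ⟨d, hd1, hd2⟩ := hderiv eps heps
  have h1 : ∀ᶠ n in Filter.hyperfilter ℕ, |s n| < d := by
    obtain ⟨hl, hr⟩ := infinitesimal_def.1 hα d hd1
    have hl' := ofSeq_lt_ofSeq.1 (show ofSeq (fun _ => -d) < ofSeq s from hl)
    have hr' := ofSeq_lt_ofSeq.1 (show ofSeq s < ofSeq (fun _ => d) from hr)
    filter_upwards [hl', hr'] with n h h' using abs_lt.2 ⟨h, h'⟩
  have h2 : ∀ᶠ n in Filter.hyperfilter ℕ, s n ≠ 0 :=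
    Ultrafilter.eventually_not.2 fun h => hα0 (Filter.Germ.coe_eq.2 h)
  have h3 : ∀ᶠ n in Filter.hyperfilter ℕ, a ≤ x + s n :=
    Filter.Germ.coe_le.1 (show ofSeq (fun _ => a) ≤ ofSeq (fun n => x + s n) from hmem.1)
  have h4 : ∀ᶠ n in Filter.hyperfilter ℕ, x + s n ≤ b :=
    Filter.Germ.coe_le.1 (show ofSeq (fun n => x + s n) ≤ ofSeq (fun _ => b) from hmem.2)
  filter_upwards [h1, h2, h3, h4] with n hn1 hn2 hn3 hn4
  have hy : x + s n ∈ Set.Icc a b \ {x} := by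
    refine ⟨⟨hn3, hn4⟩, ?_⟩
    simp only [Set.mem_singleton_iff]
    intro h
    exact hn2 (by linarith [h])
  have hdist : dist (x + s n) x < d := by
    rw [Real.dist_eq]
    simpa using hn1
  have := hd2 hy hdist
  simpa [slope_def_field] using this
end

section
/- Let a < b be real numbers, let f : ℝ → ℝ be continuous on [a,b], and let H : ℝ → ℝ satisfy HasDerivWithinAt H (f x) (Set.Icc a b) x for every x ∈ [a,b]. Then for every hyperreal x with a ≤ x ≤ b and every infinitesimal hyperreal α ≠ 0 with a ≤ x + α ≤ b, the hyperreal (H*(x + α) − H*(x))/α − f*(x) is infinitesimal, where H* and f* are the hyperreal extensions of H and f. -/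
open Hyperreal

/-- Pointwise version via the mean value theorem. -/
lemma key_pointwise (a b : ℝ) (f H : ℝ → ℝ)
    (hH : ∀ x ∈ Set.Icc a b, HasDerivWithinAt H (f x) (Set.Icc a b) x)
    (eps δ : ℝ)
    (hδ : ∀ s ∈ Set.Icc a b, ∀ t ∈ Set.Icc a b, dist s t ≤ δ → dist (f s) (f t) ≤ eps)
    (u h : ℝ) (hu : u ∈ Set.Icc a b) (huh : u + h ∈ Set.Icc a b)
    (hne : h ≠ 0) (hhδ : |h| ≤ δ) :
    |(H (u + h) - H u) / h - f u| ≤ eps := by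
  set p := min u (u + h) with hp
  set q := max u (u + h) with hq
  have hpq : p < q := by
    rcases hne.lt_or_gt with h1 | h1
    · have : u + h < u := by linarith
      simp [hp, hq, min_eq_right this.le, max_eq_left this.le, this]
    · have : u < u + h := by linarith
      simp [hp, hq, min_eq_left this.le, max_eq_right this.le, this]
  have hsub : Set.Icc p q ⊆ Set.Icc a b := by
    intro y hy
    constructor
    · exact le_trans (le_min hu.1 huh.1) hy.1
    · exact le_trans hy.2 (max_le hu.2 huh.2)
  have hcont : ContinuousOn H (Set.Icc p q) := fun y hy =>
    ((hH y (hsub hy)).continuousWithinAt).mono hsub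
  have hder : ∀ c ∈ Set.Ioo p q, HasDerivAt H (f c) c := by
    intro c hc
    have hc' : c ∈ Set.Ioo a b := by
      constructor
      · exact lt_of_le_of_lt (le_min hu.1 huh.1) hc.1
      · exact lt_of_lt_of_le hc.2 (max_le hu.2 huh.2)
    exact (hH c (hsub ⟨hc.1.le, hc.2.le⟩)).hasDerivAt
      (Icc_mem_nhds hc'.1 hc'.2)
  obtain ⟨c, hc, hceq⟩ := exists_hasDerivAt_eq_slope H f hpq hcont hder
  have hslope : (H q - H p) / (q - p) = (H (u + h) - H u) / h := by
    rcases hne.lt_or_gt with h1 | h1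
    · have : u + h < u := by linarith
      rw [hp, hq, min_eq_right this.le, max_eq_left this.le]
      rw [show u - (u + h) = -h by ring, div_neg, ← neg_div, neg_sub]
    · have : u < u + h := by linarith
      rw [hp, hq, min_eq_left this.le, max_eq_right this.le]
      congr 1; ring
  rw [← hslope, ← hceq]
  have hcab : c ∈ Set.Icc a b := hsub ⟨hc.1.le, hc.2.le⟩
  have hcu : dist c u ≤ δ := by
    have h1 : q - p = |h| := by
      rcases hne.lt_or_gt with h1 | h1
      · have : u + h < u := by linarith
        rw [hp, hq, min_eq_right this.le, max_eq_left this.le, abs_of_neg h1]; ring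
      · have : u < u + h := by linarith
        rw [hp, hq, min_eq_left this.le, max_eq_right this.le, abs_of_pos h1]; ring
    have hup : p ≤ u := min_le_left _ _
    have huq : u ≤ q := le_max_left _ _
    rw [Real.dist_eq, abs_le]
    constructor <;> nlinarith [hc.1, hc.2, abs_nonneg h]
  calc |f c - f u| = dist (f c) (f u) := (Real.dist_eq _ _).symm
    _ ≤ eps := hδ c hcab u hu hcu

/-- Lemma 2: if `H' = f` is continuous on `[a,b]`, then for any hyperreal
`x ∈ *[a,b]` and nonzero infinitesimal `α` with `x + α ∈ *[a,b]`, the derivative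
`f(x)` equals the difference quotient `(H(x+α) − H(x))/α` up to an infinitesimal. -/
theorem deriv_diff_quotient_infinitesimal
    (a b : ℝ) (hab : a < b) (f : ℝ → ℝ) (hf : ContinuousOn f (Set.Icc a b))
    (H : ℝ → ℝ) (hH : ∀ x ∈ Set.Icc a b, HasDerivWithinAt H (f x) (Set.Icc a b) x)
    (x : ℝ*) (hx : (a : ℝ*) ≤ x ∧ x ≤ (b : ℝ*))
    (α : ℝ*) (hα : Infinitesimal α) (hα0 : α ≠ 0)
    (hxα : (a : ℝ*) ≤ x + α ∧ x + α ≤ (b : ℝ*)) :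
    Infinitesimal ((Hyperreal.extension H (x + α) - Hyperreal.extension H x) / α -
      Hyperreal.extension f x) := by
  obtain ⟨xs, rfl⟩ := ofSeq_surjective x
  obtain ⟨as, rfl⟩ := ofSeq_surjective α
  rw [infinitesimal_def]
  intro r hr
  -- uniform continuity of f on [a,b]
  have huc : UniformContinuousOn f (Set.Icc a b) :=
    isCompact_Icc.uniformContinuousOn_of_continuous hf
  obtain ⟨δ, hδ0, hδ⟩ := Metric.uniformContinuousOn_iff_le.1 huc (r / 2) (by linarith)
  -- eventual facts
  have h1 : ∀ᶠ n in Filter.hyperfilter ℕ, a ≤ xs n := Filter.Germ.coe_le.1 hx.1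
  have h2 : ∀ᶠ n in Filter.hyperfilter ℕ, xs n ≤ b := Filter.Germ.coe_le.1 hx.2
  have h3 : ∀ᶠ n in Filter.hyperfilter ℕ, a ≤ xs n + as n := Filter.Germ.coe_le.1 hxα.1
  have h4 : ∀ᶠ n in Filter.hyperfilter ℕ, xs n + as n ≤ b := Filter.Germ.coe_le.1 hxα.2
  have h5 : ∀ᶠ n in Filter.hyperfilter ℕ, as n ≠ 0 := by
    rw [Ultrafilter.eventually_not]
    intro hcon
    exact hα0 (Filter.Germ.coe_eq.2 hcon)
  have hαδ := infinitesimal_def.1 hα δ hδ0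
  have h6 : ∀ᶠ n in Filter.hyperfilter ℕ, as n < δ :=
    Filter.Germ.coe_lt.1 hαδ.2
  have h7 : ∀ᶠ n in Filter.hyperfilter ℕ, -δ < as n :=
    Filter.Germ.coe_lt.1 hαδ.1
  have key : ∀ᶠ n in Filter.hyperfilter ℕ,
      |(H (xs n + as n) - H (xs n)) / as n - f (xs n)| ≤ r / 2 := by
    filter_upwards [h1, h2, h3, h4, h5, h6, h7] with n g1 g2 g3 g4 g5 g6 g7
    exact key_pointwise a b f H hH (r / 2) δ hδ (xs n) (as n) ⟨g1, g2⟩ ⟨g3, g4⟩ g5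
      (abs_le.2 ⟨g7.le, g6.le⟩)
  have hQ : (Hyperreal.extension H (ofSeq xs + ofSeq as) - Hyperreal.extension H (ofSeq xs)) /
      ofSeq as - Hyperreal.extension f (ofSeq xs)
      = ofSeq (fun n => (H (xs n + as n) - H (xs n)) / as n - f (xs n)) := rfl
  rw [hQ]
  constructor
  · refine Filter.Germ.coe_lt.2 ?_
    filter_upwards [key] with n hn
    have := (abs_le.1 hn).1
    simp only [Function.comp_apply]
    linarith
  · refine Filter.Germ.coe_lt.2 ?_
    filter_upwards [key] with n hn
    have := (abs_le.1 hn).2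
    linarith
end

section
/- Let a < b be real numbers, let H : ℝ → ℝ be continuous on [a,b], and let h : ℝ → ℝ satisfy HasDerivAt H (h t) t for every t in the open interval (a,b). Then for all hyperreals x, y with a ≤ x < y ≤ b, there exists a hyperreal c with x < c < y such that H*(y) − H*(x) = (y − x)·h*(c), where H* and h* are the hyperreal extensions of H and h. -/
open Hyperreal

theorem real_mvt (a b : ℝ) (H : ℝ → ℝ) (hH : ContinuousOn H (Set.Icc a b))
    (h : ℝ → ℝ) (hH' : ∀ t ∈ Set.Ioo a b, HasDerivAt H (h t) t) :
    ∀ x y : ℝ, a ≤ x → x < y → y ≤ b →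
      ∃ c, x < c ∧ c < y ∧ H y - H x = (y - x) * h c := by
  intro x y hax hxy hyb
  obtain ⟨c, hc, hceq⟩ := exists_hasDerivAt_eq_slope H h hxy
    (hH.mono (Set.Icc_subset_Icc hax hyb))
    (fun t ht => hH' t ⟨lt_of_le_of_lt hax ht.1, lt_of_lt_of_le ht.2 hyb⟩)
  refine ⟨c, hc.1, hc.2, ?_⟩
  rw [hceq, mul_div_cancel₀ _ (sub_ne_zero.mpr hxy.ne')]

/-- The transferred mean value theorem: if `H` is continuous on `[a,b]` and has
derivative `h` on `(a,b)`, then for hyperreal endpoints `a ≤ x < y ≤ b` there is a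
hyperreal `c` strictly between them with `H*(y) − H*(x) = (y − x)·h*(c)`. -/
theorem hyperreal_mean_value
    (a b : ℝ) (hab : a < b) (H : ℝ → ℝ) (hH : ContinuousOn H (Set.Icc a b))
    (h : ℝ → ℝ) (hH' : ∀ t ∈ Set.Ioo a b, HasDerivAt H (h t) t)
    (x y : ℝ*) (hax : (a : ℝ*) ≤ x) (hxy : x < y) (hyb : y ≤ (b : ℝ*)) :
    ∃ c : ℝ*, x < c ∧ c < y ∧
      Hyperreal.extension H y - Hyperreal.extension H x =
        (y - x) * Hyperreal.extension h c := by
  revert hax hxy hyb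
  refine x.inductionOn₂ y fun f g => ?_
  intro hax hxy hyb
  have hax' : ∀ᶠ n in (Filter.hyperfilter ℕ : Filter ℕ), a ≤ f n := Filter.Germ.coe_le.1 hax
  have hxy' : ∀ᶠ n in (Filter.hyperfilter ℕ : Filter ℕ), f n < g n := Filter.Germ.coe_lt.1 hxy
  have hyb' : ∀ᶠ n in (Filter.hyperfilter ℕ : Filter ℕ), g n ≤ b := Filter.Germ.coe_le.1 hyb
  have hall := (hax'.and (hxy'.and hyb'))
  classical
  set c : ℕ → ℝ := fun n =>
    if hn : a ≤ f n ∧ f n < g n ∧ g n ≤ b then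
      Classical.choose (real_mvt a b H hH h hH' (f n) (g n) hn.1 hn.2.1 hn.2.2)
    else 0 with hcdef
  have hspec : ∀ᶠ n in (Filter.hyperfilter ℕ : Filter ℕ),
      f n < c n ∧ c n < g n ∧ H (g n) - H (f n) = (g n - f n) * h (c n) := by
    refine hall.mono fun n hn => ?_
    have := Classical.choose_spec (real_mvt a b H hH h hH' (f n) (g n) hn.1 hn.2.1 hn.2.2)
    simpa [hcdef, dif_pos hn] using this
  refine ⟨(c : Filter.Germ _ ℝ), Filter.Germ.coe_lt.2 (hspec.mono fun n hn => hn.1),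
    Filter.Germ.coe_lt.2 (hspec.mono fun n hn => hn.2.1), ?_⟩
  simp only [Hyperreal.extension, Filter.Germ.map_coe]
  exact Filter.Germ.coe_eq.2 (hspec.mono fun n hn => hn.2.2)
end

section
/- Let a < b < c be real numbers, let f : ℝ → ℝ be continuous on [a,c], let N : ℕ → ℕ be such that ofSeq (fun n ↦ (N n : ℝ)) is infinite positive, and define B : ℕ → ℕ by B n = ⌊(N n)·(b−a)/(c−a)⌋. Then the hyperreal ofSeq (fun n ↦ ∑_{k=1}^{N n − B n} f(b + k·(c−b)/(N n − B n))·(c−b)/(N n − B n) − ∑_{k=B n + 1}^{N n} f(a + k·(c−a)/(N n))·(c−a)/(N n)) is infinitesimal. -/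
open Hyperreal

set_option maxHeartbeats 1600000 in
/-- Claim (22) in the proof of Theorem 3: the omega sum of `f` on `[b,c]` with
`Ω − B` subintervals differs by at most an infinitesimal from the last `Ω − B`
terms of the omega sum of `f` on `[a,c]` with `Ω` subintervals. -/
theorem omega_sum_right_piece_infinitesimal
    (a b c : ℝ) (hab : a < b) (hbc : b < c) (f : ℝ → ℝ)
    (hf : ContinuousOn f (Set.Icc a c))
    (N : ℕ → ℕ) (hN : (ofSeq fun n => (N n : ℝ)).InfinitePos)
    (B : ℕ → ℕ) (hB : ∀ n, B n = ⌊(N n : ℝ) * (b - a) / (c - a)⌋₊) :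
    Infinitesimal (ofSeq fun n =>
      (∑ k ∈ Finset.Icc 1 (N n - B n),
          f (b + k * (c - b) / (N n - B n)) * ((c - b) / (N n - B n))) -
        ∑ k ∈ Finset.Icc (B n + 1) (N n),
          f (a + k * (c - a) / (N n)) * ((c - a) / (N n))) := by
  have hac : a < c := hab.trans hbc
  have hca : (0:ℝ) < c - a := by linarith
  have hcb : (0:ℝ) < c - b := by linarith
  have hba : (0:ℝ) < b - a := by linarith
  obtain ⟨K, hK⟩ := isCompact_Icc.exists_bound_of_continuousOn hf
  have hK0 : 0 ≤ K := (abs_nonneg _).trans (hK a (Set.left_mem_Icc.2 hac.le))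
  have huc := isCompact_Icc.uniformContinuousOn_of_continuous hf
  rw [Metric.uniformContinuousOn_iff] at huc
  set S : ℕ → ℝ := fun n =>
      (∑ k ∈ Finset.Icc 1 (N n - B n),
          f (b + k * (c - b) / (N n - B n)) * ((c - b) / (N n - B n))) -
        ∑ k ∈ Finset.Icc (B n + 1) (N n),
          f (a + k * (c - a) / (N n)) * ((c - a) / (N n)) with hSdef
  have key : ∀ eps : ℝ, 0 < eps → ∃ R : ℝ, ∀ n, R < N n → |S n| < eps := by
    intro eps heps
    set eps0 : ℝ := eps / (2 * (c - a)) with heps0def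
    have heps0 : 0 < eps0 := div_pos heps (by linarith)
    obtain ⟨δ, hδ, hδf⟩ := huc eps0 heps0
    refine ⟨max (max (2*(c-a)/δ) (2*K*(c-a)/eps)) 1, fun n hn => ?_⟩
    set ν : ℝ := (N n : ℝ) with hνdef
    have hν1 : (1:ℝ) < ν := lt_of_le_of_lt (le_max_right _ _) hn
    have hν : (0:ℝ) < ν := by linarith
    have hνδ : 2*(c-a)/δ < ν := lt_of_le_of_lt ((le_max_left _ _).trans (le_max_left _ _)) hn
    have hνK : 2*K*(c-a)/eps < ν := lt_of_le_of_lt ((le_max_right _ _).trans (le_max_left _ _)) hn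
    have harg : 0 ≤ ν * (b-a)/(c-a) := by positivity
    have hBle : (B n : ℝ) ≤ ν * (b-a)/(c-a) := by rw [hB n]; exact Nat.floor_le harg
    have hBlt : ν * (b-a)/(c-a) < (B n : ℝ) + 1 := by
      rw [hB n]; exact Nat.lt_floor_add_one _
    have hdivlt : ν * (b-a)/(c-a) < ν := by
      rw [div_lt_iff₀ hca]; nlinarith
    have hBN : B n < N n := by
      rw [hB n, Nat.floor_lt harg]; exact hdivlt
    set M : ℕ := N n - B n with hMdef
    have hMcast : (M:ℝ) = ν - (B n : ℝ) := by
      rw [hMdef, Nat.cast_sub hBN.le]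
    have hμpos : (0:ℝ) < (M:ℝ) := by rw [hMcast]; linarith
    have hμleν : (M:ℝ) ≤ ν := by
      have : (0:ℝ) ≤ (B n : ℝ) := Nat.cast_nonneg _
      rw [hMcast]; linarith
    have e1 : (B n : ℝ) * (c-a) ≤ ν * (b-a) := (le_div_iff₀ hca).mp hBle
    have e2 : ν * (b-a) < ((B n : ℝ) + 1) * (c-a) := (div_lt_iff₀ hca).mp hBlt
    -- distance between weights
    have hW : (c-b)/(M:ℝ) - (c-a)/ν = ((c-a)*(B n : ℝ) - (b-a)*ν)/((M:ℝ)*ν) := by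
      rw [div_sub_div _ _ (ne_of_gt hμpos) (ne_of_gt hν)]
      congr 1
      rw [hMcast]; ring
    have hw : |(c-b)/(M:ℝ) - (c-a)/ν| ≤ (c-a)/((M:ℝ)*ν) := by
      rw [hW, abs_div, abs_of_pos (mul_pos hμpos hν)]
      gcongr
      rw [abs_le]
      constructor <;> linarith
    have h1 : |b - a - (B n : ℝ)*(c-a)/ν| ≤ (c-a)/ν := by
      have hA : b - a - (B n : ℝ)*(c-a)/ν = ((b-a)*ν - (B n : ℝ)*(c-a))/ν := by
        field_simp
      rw [hA, abs_div, abs_of_pos hν]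
      gcongr
      rw [abs_le]
      constructor <;> linarith
    -- reindex second sum
    have hIcc : Finset.Icc (B n + 1) (N n) = (Finset.Icc 1 M).map (addLeftEmbedding (B n)) := by
      rw [Finset.map_add_left_Icc]
      congr 1
      omega
    have hsum : S n = ∑ j ∈ Finset.Icc 1 M,
        (f (b + (j:ℝ) * (c - b) / (M:ℝ)) * ((c - b) / (M:ℝ))
          - f (a + ((B n : ℝ) + (j:ℝ)) * (c - a) / ν) * ((c - a) / ν)) := by
      simp only [hSdef]
      rw [← hνdef, ← hMdef, ← hMcast, hIcc, Finset.sum_map, ← Finset.sum_sub_distrib]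
      refine Finset.sum_congr rfl fun j hj => ?_
      simp only [addLeftEmbedding_apply]
      push_cast
      ring
    -- per-term bound
    have hterm : ∀ j ∈ Finset.Icc 1 M,
        |f (b + (j:ℝ) * (c - b) / (M:ℝ)) * ((c - b) / (M:ℝ))
          - f (a + ((B n : ℝ) + (j:ℝ)) * (c - a) / ν) * ((c - a) / ν)|
          ≤ K * ((c-a)/((M:ℝ)*ν)) + eps0 * ((c-a)/ν) := by
      intro j hj
      obtain ⟨hj1, hjM⟩ := Finset.mem_Icc.mp hj
      have hj1' : (1:ℝ) ≤ (j:ℝ) := by exact_mod_cast hj1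
      have hjM' : (j:ℝ) ≤ (M:ℝ) := by exact_mod_cast hjM
      set x : ℝ := b + (j:ℝ) * (c - b) / (M:ℝ) with hxdef
      set y : ℝ := a + ((B n : ℝ) + (j:ℝ)) * (c - a) / ν with hydef
      have hx : x ∈ Set.Icc a c := by
        constructor
        · have h0 : 0 ≤ (j:ℝ) * (c - b) / (M:ℝ) := by positivity
          rw [hxdef]; linarith
        · have h0 : (j:ℝ) * (c - b) / (M:ℝ) ≤ c - b := by
            rw [div_le_iff₀ hμpos]; nlinarith
          rw [hxdef]; linarith
      have hy : y ∈ Set.Icc a c := by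
        have hBj0 : (0:ℝ) ≤ (B n : ℝ) + (j:ℝ) := by positivity
        constructor
        · have h0 : 0 ≤ ((B n : ℝ) + (j:ℝ)) * (c - a) / ν := by positivity
          rw [hydef]; linarith
        · have h0 : ((B n : ℝ) + (j:ℝ)) * (c - a) / ν ≤ c - a := by
            rw [div_le_iff₀ hν]
            have hBjν : (B n : ℝ) + (j:ℝ) ≤ ν := by linarith [hMcast, hjM']
            nlinarith
          rw [hydef]; linarith
      have hx_y : x - y = (b - a - (B n : ℝ)*(c-a)/ν)
          + (j:ℝ)*((c-b)/(M:ℝ) - (c-a)/ν) := by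
        rw [hxdef, hydef]; ring
      have hxyb : |x - y| < δ := by
        have habs : |x - y| ≤ 2*(c-a)/ν := by
          rw [hx_y]
          calc |(b - a - (B n : ℝ)*(c-a)/ν) + (j:ℝ)*((c-b)/(M:ℝ) - (c-a)/ν)|
              ≤ |b - a - (B n : ℝ)*(c-a)/ν| + |(j:ℝ)| * |(c-b)/(M:ℝ) - (c-a)/ν| := by
                refine (abs_add_le _ _).trans ?_
                rw [abs_mul]
            _ ≤ (c-a)/ν + (M:ℝ) * ((c-a)/((M:ℝ)*ν)) := by
                refine add_le_add h1 ?_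
                refine mul_le_mul ?_ hw (abs_nonneg _) (by positivity)
                rw [abs_of_nonneg (by positivity : (0:ℝ) ≤ (j:ℝ))]
                exact hjM'
            _ = 2*(c-a)/ν := by
                field_simp
                ring
        have h2 : 2*(c-a) < ν * δ := (div_lt_iff₀ hδ).mp hνδ
        have : 2*(c-a)/ν < δ := by rw [div_lt_iff₀ hν]; linarith
        linarith
      have hfxy : |f x - f y| ≤ eps0 := by
        have := hδf x hx y hy (by rwa [Real.dist_eq])
        rw [Real.dist_eq] at this
        exact this.le
      have hfx : |f x| ≤ K := hK x hx
      calc |f x * ((c-b)/(M:ℝ)) - f y * ((c-a)/ν)|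
          = |f x * ((c-b)/(M:ℝ) - (c-a)/ν) + (f x - f y) * ((c-a)/ν)| := by
            congr 1; ring
        _ ≤ |f x| * |(c-b)/(M:ℝ) - (c-a)/ν| + |f x - f y| * ((c-a)/ν) := by
            refine (abs_add_le _ _).trans ?_
            rw [abs_mul, abs_mul, abs_of_pos (div_pos hca hν)]
        _ ≤ K * ((c-a)/((M:ℝ)*ν)) + eps0 * ((c-a)/ν) := by
            refine add_le_add (mul_le_mul hfx hw (abs_nonneg _) hK0) ?_
            exact mul_le_mul_of_nonneg_right hfxy (by positivity)
    have hsb : |S n| ≤ K*(c-a)/ν + eps0*(c-a) := by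
      rw [hsum]
      have hcard : (Finset.Icc 1 M).card = M := by
        rw [Nat.card_Icc]; omega
      calc |∑ j ∈ Finset.Icc 1 M,
            (f (b + (j:ℝ) * (c - b) / (M:ℝ)) * ((c - b) / (M:ℝ))
              - f (a + ((B n : ℝ) + (j:ℝ)) * (c - a) / ν) * ((c - a) / ν))|
          ≤ ∑ j ∈ Finset.Icc 1 M,
            |f (b + (j:ℝ) * (c - b) / (M:ℝ)) * ((c - b) / (M:ℝ))
              - f (a + ((B n : ℝ) + (j:ℝ)) * (c - a) / ν) * ((c - a) / ν)| :=
            Finset.abs_sum_le_sum_abs _ _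
        _ ≤ (Finset.Icc 1 M).card • (K * ((c-a)/((M:ℝ)*ν)) + eps0 * ((c-a)/ν)) :=
            Finset.sum_le_card_nsmul _ _ _ hterm
        _ = (M:ℝ) * (K * ((c-a)/((M:ℝ)*ν)) + eps0 * ((c-a)/ν)) := by
            rw [hcard, nsmul_eq_mul]
        _ ≤ K*(c-a)/ν + eps0*(c-a) := by
            have eA : (M:ℝ) * (K * ((c-a)/((M:ℝ)*ν))) = K*(c-a)/ν := by
              field_simp
            have eB : (M:ℝ) * (eps0 * ((c-a)/ν)) ≤ eps0*(c-a) := by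
              rw [mul_comm, mul_assoc]
              refine mul_le_mul_of_nonneg_left ?_ heps0.le
              rw [div_mul_eq_mul_div, div_le_iff₀ hν]
              nlinarith
            nlinarith [eA, eB]
    have hKν : K*(c-a)/ν < eps/2 := by
      have h2 : 2*K*(c-a) < ν * eps := (div_lt_iff₀ heps).mp hνK
      rw [div_lt_iff₀ hν]
      nlinarith
    have hepshalf : eps0*(c-a) = eps/2 := by
      rw [heps0def]
      field_simp
    linarith [hsb]
  rw [infinitesimal_def]
  intro r hr
  obtain ⟨R, hR⟩ := key r hr
  have hev : ∀ᶠ n in Filter.hyperfilter ℕ, R < N n := ofSeq_lt_ofSeq.mp (hN R)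
  have h2 : ∀ᶠ n in Filter.hyperfilter ℕ, |S n| < r := hev.mono fun n hn => hR n hn
  constructor
  · rw [show (-(r:ℝ*)) = ((-r : ℝ) : ℝ*) by push_cast; ring]
    exact ofSeq_lt_ofSeq.mpr (h2.mono fun n hn => (abs_lt.mp hn).1)
  · exact ofSeq_lt_ofSeq.mpr (h2.mono fun n hn => (abs_lt.mp hn).2)
end
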